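/- arXiv:2301.11511 — 3 statements merged into one kernel-verified Lean document; each statement's English description precedes it below -/
import Mathlib

section
/- Under the flushing algorithm, every pre-snapshot message residing in a router buffer (not currently in transit on a link) is counted (marked and added to xcount) by at most one router. -/
/-- A pre-snapshot message travels through a sequence of routers
`r 0, r 1, …`; it resides in the buffer of router `r k` during the interval
`[arrive k, depart k]`, with `depart k < arrive (k+1)` (hops are ordered).
`tokenRecv R` is the time router `R` first receives the snapshot token.
Router `r k` *counts* the message iff the message is in its buffer when the token
first arrives (`arrive k ≤ tokenRecv (r k) ≤ depart k`).
Token priority on FIFO links: if the token reached `r k` before the message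
departed, then the token reaches the next hop before the message does
(`tokenRecv (r (k+1)) < arrive (k+1)`).
Conclusion: the message is counted by at most one router on its path. -/
theorem pre_snapshot_message_counted_at_most_once
    {Router : Type} (r : ℕ → Router) (arrive depart : ℕ → ℕ)
    (tokenRecv : Router → ℕ)
    (hStay : ∀ k, arrive k ≤ depart k)
    (hHop : ∀ k, depart k < arrive (k + 1))
    (hTokPriority : ∀ k, tokenRecv (r k) ≤ depart k → tokenRecv (r (k + 1)) < arrive (k + 1))
    (counts : ℕ → Prop)
    (hCounts : ∀ k, counts k ↔ arrive k ≤ tokenRecv (r k) ∧ tokenRecv (r k) ≤ depart k) :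
    ∀ k l, counts k → counts l → k = l := by
  have aux : ∀ k, tokenRecv (r k) ≤ depart k →
      ∀ d, tokenRecv (r (k + 1 + d)) < arrive (k + 1 + d) := by
    intro k hk d
    induction d with
    | zero => exact hTokPriority k hk
    | succ d ih =>
      have : tokenRecv (r (k + 1 + d)) ≤ depart (k + 1 + d) :=
        le_trans ih.le (hStay _)
      exact hTokPriority _ this
  have key : ∀ k l, k < l → counts k → ¬ counts l := by
    intro k l hkl hk hl
    obtain ⟨d, rfl⟩ : ∃ d, l = k + 1 + d := ⟨l - (k + 1), by omega⟩
    have h1 := (hCounts k).mp hk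
    have h2 := (hCounts _).mp hl
    exact absurd h2.1 (not_le.mpr (aux k h1.2 d))
  intro k l hk hl
  rcases lt_trichotomy k l with h | h | h
  · exact absurd hl (key k l h hk)
  · exact h
  · exact absurd hk (key l k h hl)
end

section
/- In the flushing algorithm with the xcount-updating scheme for directories, if every router has taken its local snapshot and reported, and the total processed count equals the total expected count (sum of pcount_i equals sum of xcount_i), then no pre-snapshot message remains anywhere in the NoC. -/
open Finset

/-- `Msg` is the (finite) set of pre-snapshot messages.  Each message
is counted in `xcount` at exactly one router (`countedAt`), and `pcount i` counts
exactly the pre-snapshot messages that have been delivered (left the NoC) at their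
destination router `i`.  If every router has reported and `∑ pcount = ∑ xcount`,
then every pre-snapshot message has been delivered: none remains in the NoC. -/
theorem flush_termination
    {Msg Router : Type} [Fintype Msg] [Fintype Router] [DecidableEq Router]
    (countedAt dest : Msg → Router)
    (delivered : Msg → Prop) [DecidablePred delivered]
    (xcount pcount : Router → ℕ)
    (hx : ∀ i, xcount i = (univ.filter fun m => countedAt m = i).card)
    (hp : ∀ i, pcount i = (univ.filter fun m => delivered m ∧ dest m = i).card)
    (hsum : ∑ i, pcount i = ∑ i, xcount i) :
    ∀ m : Msg, delivered m := by
  classical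
  have hX : ∑ i, xcount i = Fintype.card Msg := by
    simp only [hx]
    rw [← Finset.card_eq_sum_card_fiberwise (f := countedAt) (fun m _ => mem_univ _)]
    rfl
  have hP : ∑ i, pcount i = (univ.filter fun m => delivered m).card := by
    simp only [hp]
    have : ∀ i : Router, (univ.filter fun m => delivered m ∧ dest m = i) =
        ((univ.filter fun m => delivered m).filter fun m => dest m = i) := by
      intro i; ext m; simp [and_comm]
    simp only [this]
    exact (Finset.card_eq_sum_card_fiberwise (f := dest)
      (s := univ.filter fun m => delivered m) (fun m _ => mem_univ _)).symm
  rw [hP, hX] at hsum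
  have := (Finset.card_eq_iff_eq_univ _).mp (by simpa using hsum)
  intro m
  have hm : m ∈ univ.filter fun m => delivered m := by rw [this]; exact mem_univ m
  exact (mem_filter.mp hm).2
end

section
/- In the directory xcount-updating scheme, the invariant 'xcount − pcount equals the number of pre-snapshot messages currently in the system' is preserved by each directory action: consuming one message and generating n messages changes xcount by max(n−1, 0)·[n≥2] adjustments such that the invariant still holds (n=0: pcount+1; n=1: no change; n≥2: xcount + (n−1)). -/
/-- System state: `L` live pre-snapshot messages, cumulative expected count `x`
and processed count `p`. -/
structure SysState where
  L : ℕ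
  x : ℕ
  p : ℕ

/-- A directory event consuming one live pre-snapshot message and emitting `n` new
ones: `L` becomes `L - 1 + n`; per the xcount-updating scheme, if `n = 0` then
`pcount` increases by 1, if `n = 1` nothing changes, and if `n ≥ 2` then `xcount`
increases by `n - 1`.  (An ordinary, non-directory delivery is the case `n = 0`.) -/
def dirStep (n : ℕ) (s : SysState) : SysState where
  L := s.L - 1 + n
  x := if 2 ≤ n then s.x + (n - 1) else s.x
  p := if n = 0 then s.p + 1 else s.p

/-- Every directory event (and ordinary delivery, `n = 0`) preserves
the invariant `xcount − pcount = L` (stated subtraction-free as `x = p + L`), and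
under the invariant `L = 0` iff `pcount = xcount`. -/
theorem dirStep_preserves_invariant
    (n : ℕ) (s : SysState) (hLive : 1 ≤ s.L) (hInv : s.x = s.p + s.L) :
    ((dirStep n s).x = (dirStep n s).p + (dirStep n s).L) ∧
      ((dirStep n s).L = 0 ↔ (dirStep n s).p = (dirStep n s).x) := by
  have h : (dirStep n s).x = (dirStep n s).p + (dirStep n s).L := by
    simp only [dirStep, hInv]
    match n with
    | 0 => simp; omega
    | 1 => simp; omega
    | (k+2) => simp; omega
  refine ⟨h, ?_⟩
  constructor
  · intro h0; omega
  · intro hp; omega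
end
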